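/- Let G be a finite group, H a π-Hall subgroup of G, and A a normal subgroup of G such that A is a 2-group (or more generally a solvable group) and the image of H in G/A is pronormal in G/A. Then H is pronormal in G. -/

import Mathlib

open Pointwise

/-- `conjSub H g` is the conjugate subgroup `H^g = g⁻¹Hg`. -/
def conjSub {G : Type*} [Group G] (H : Subgroup G) (g : G) : Subgroup G :=
  MulAut.conj g⁻¹ • H

/-- `H` is pronormal: for every `g`, `H` and `H^g` are conjugate in `⟨H, H^g⟩`. -/
def IsPronormal {G : Type*} [Group G] (H : Subgroup G) : Prop :=
  ∀ g : G, ∃ x ∈ H ⊔ conjSub H g, conjSub H x = conjSub H g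


/-- `H` is a `π`-Hall subgroup: `|H|` is a `π`-number and its index a `π'`-number. -/
def IsPiHall {G : Type*} [Group G] (π : Set ℕ) (H : Subgroup G) : Prop :=
  (∀ p : ℕ, p.Prime → p ∣ Nat.card H → p ∈ π) ∧
  (∀ p : ℕ, p.Prime → p ∣ H.index → p ∉ π)

/-!
Lift an element conjugating `H̄` to `H̄^ḡ` inside `⟨H̄, H̄^ḡ⟩` to some `y ∈ K = ⟨H, H^g⟩`.
Then `H^y` and `H^g` are `π`-Hall subgroups of `K` that agree modulo the solvable normal subgroup
`A ∩ K` of `K`, so it suffices that such Hall subgroups are conjugate under `A ∩ K`.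
For a solvable normal `N`, induction on `|N|` through `[N, N]` and `N / [N, N]` reduces this to
abelian `N`. There `H ∩ N` is the `π`-part of `N`, hence normal and the same for both Hall
subgroups; modulo it they become complements of an abelian normal subgroup of coprime order and
index, which are conjugate by the abelian case of Schur–Zassenhaus.
-/

section ConjSub

variable {G G' : Type*} [Group G] [Group G']

theorem mem_conjSub {H : Subgroup G} {g x : G} : x ∈ conjSub H g ↔ g * x * g⁻¹ ∈ H := by
  constructor
  · rintro ⟨h, hh, rfl⟩
    simpa [MulAut.conj, mul_assoc] using hh
  · intro hx
    exact ⟨g * x * g⁻¹, hx, by simp [MulAut.conj, mul_assoc]⟩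

theorem conjSub_eq_map (H : Subgroup G) (g : G) :
    conjSub H g = H.map (MulAut.conj g⁻¹).toMonoidHom :=
  rfl

theorem conjSub_mul (H : Subgroup G) (a b : G) :
    conjSub H (a * b) = conjSub (conjSub H a) b := by
  ext x
  simp [mem_conjSub, mul_assoc]

theorem conjSub_of_mem {H : Subgroup G} {g : G} (hg : g ∈ H) : conjSub H g = H := by
  ext x
  rw [mem_conjSub, H.mul_mem_cancel_right (H.inv_mem hg), H.mul_mem_cancel_left hg]

theorem conjSub_of_normal (N : Subgroup G) [N.Normal] (g : G) : conjSub N g = N :=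
  Subgroup.Normal.map_conj_eq N g⁻¹

theorem conjSub_mono {H K : Subgroup G} (h : H ≤ K) (g : G) : conjSub H g ≤ conjSub K g :=
  fun _ hx => mem_conjSub.mpr (h (mem_conjSub.mp hx))

theorem map_conjSub (f : G →* G') (H : Subgroup G) (g : G) :
    (conjSub H g).map f = conjSub (H.map f) (f g) := by
  ext x
  simp only [Subgroup.mem_map, mem_conjSub]
  constructor
  · rintro ⟨y, hy, rfl⟩
    exact ⟨g * y * g⁻¹, hy, by simp [mul_assoc]⟩
  · rintro ⟨y, hy, hxy⟩
    refine ⟨g⁻¹ * y * g, by simpa [mul_assoc] using hy, ?_⟩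
    simp only [map_mul, map_inv, hxy]
    group

theorem conjSub_subgroupOf {H K : Subgroup G} (c : K) :
    conjSub (H.subgroupOf K) c = (conjSub H c).subgroupOf K := by
  ext x
  simp [mem_conjSub, Subgroup.mem_subgroupOf]

theorem conjSub_eq_of_conjSub_subgroupOf_eq {P Q K : Subgroup G} (hP : P ≤ K) (hQ : Q ≤ K)
    {c : K} (h : conjSub (P.subgroupOf K) c = Q.subgroupOf K) : conjSub P c = Q := by
  have hPc : conjSub P c ≤ K := (conjSub_mono hP c).trans (conjSub_of_mem c.2).le
  rwa [conjSub_subgroupOf, Subgroup.subgroupOf_inj, inf_of_le_left hQ,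
    inf_of_le_left hPc] at h

end ConjSub

section Lattice

variable {G G' : Type*} [Group G] [Group G']

theorem Subgroup.sup_ker_eq_of_map_eq (f : G →* G') {H₁ H₂ : Subgroup G}
    (h : H₁.map f = H₂.map f) : H₁ ⊔ f.ker = H₂ ⊔ f.ker := by
  rw [← Subgroup.comap_map_eq, h, Subgroup.comap_map_eq]

theorem Subgroup.sup_inf_assoc_of_le_of_normal {P K : Subgroup G} (A : Subgroup G) [A.Normal]
    (h : P ≤ K) : (P ⊔ A) ⊓ K = P ⊔ A ⊓ K := by
  refine le_antisymm (fun x hx => ?_)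
    (sup_le (le_inf le_sup_left h) (inf_le_inf_right K le_sup_right))
  have hx' : x ∈ (P : Set G) * ↑(A ⊓ K) := by
    rw [Subgroup.mul_inf_assoc _ _ _ h, ← Subgroup.mul_normal]
    exact hx
  obtain ⟨p, hp, a, ha, rfl⟩ := hx'
  exact Subgroup.mul_mem_sup hp ha

theorem Subgroup.sup_subgroupOf_of_normal {P K : Subgroup G} (A : Subgroup G) [A.Normal]
    (h : P ≤ K) : P.subgroupOf K ⊔ A.subgroupOf K = (P ⊔ A).subgroupOf K := by
  rw [← Subgroup.inf_subgroupOf_right A K, ← Subgroup.subgroupOf_sup h inf_le_right,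
    ← Subgroup.sup_inf_assoc_of_le_of_normal A h, Subgroup.inf_subgroupOf_right]

theorem Subgroup.relIndex_sup_eq_inf_relIndex [Finite G] (H T : Subgroup G) [T.Normal] :
    H.relIndex (H ⊔ T) = (H ⊓ T).relIndex T := by
  have : (H ⊓ T).IsFiniteRelIndex H := Subgroup.isFiniteRelIndex_of_finiteIndex
  have h₁ := Subgroup.relIndex_mul_relIndex (H ⊓ T) H (H ⊔ T) inf_le_left le_sup_left
  have h₂ := Subgroup.relIndex_mul_relIndex (H ⊓ T) T (H ⊔ T) inf_le_right le_sup_right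
  rw [Subgroup.relIndex_sup_right, ← Subgroup.inf_relIndex_left H T, ← h₁, mul_comm] at h₂
  exact (Nat.eq_of_mul_eq_mul_left (Nat.pos_of_ne_zero Subgroup.relIndex_ne_zero) h₂).symm

end Lattice

namespace IsPiHall

variable {G G' : Type*} [Group G] [Group G'] {π : Set ℕ} {H : Subgroup G}

theorem coprime (h : IsPiHall π H) : (Nat.card H).Coprime H.index :=
  Nat.coprime_of_dvd fun p hp hcard hindex => h.2 p hp hindex (h.1 p hp hcard)

theorem conjSub (h : IsPiHall π H) (g : G) : IsPiHall π (conjSub H g) := by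
  rw [conjSub_eq_map]
  refine ⟨fun p hp hd => h.1 p hp ?_, fun p hp hd => h.2 p hp ?_⟩
  · rwa [Subgroup.card_map_of_injective (MulAut.conj g⁻¹).injective] at hd
  · rwa [Subgroup.index_map_of_bijective (MulAut.conj g⁻¹).bijective] at hd

theorem map (h : IsPiHall π H) {f : G →* G'} (hf : Function.Surjective f) :
    IsPiHall π (H.map f) :=
  ⟨fun p hp hd => h.1 p hp (hd.trans (Subgroup.card_map_dvd H f)),
    fun p hp hd => h.2 p hp (hd.trans (Subgroup.index_map_dvd H hf))⟩

theorem subgroupOf (h : IsPiHall π H) {K : Subgroup G} (hHK : H ≤ K) :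
    IsPiHall π (H.subgroupOf K) :=
  ⟨fun p hp hd => h.1 p hp
      (by rwa [Nat.card_congr (Subgroup.subgroupOfEquivOfLe hHK).toEquiv] at hd),
    fun p hp hd => h.2 p hp (hd.trans (Subgroup.relIndex_dvd_index_of_le hHK))⟩

theorem le_of_normal [Finite G] (h : IsPiHall π H) {T : Subgroup G} [T.Normal]
    (hT : ∀ p : ℕ, p.Prime → p ∣ Nat.card T → p ∈ π) : T ≤ H := by
  have hrel : H.relIndex (H ⊔ T) = 1 := by
    refine Nat.eq_one_iff_not_exists_prime_dvd.mpr fun p hp hd => h.2 p hp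
      (hd.trans (Subgroup.relIndex_dvd_index_of_le le_sup_left)) (hT p hp ?_)
    rw [Subgroup.relIndex_sup_eq_inf_relIndex] at hd
    exact hd.trans (Subgroup.relIndex_dvd_card _ _)
  exact le_sup_right.trans (Subgroup.relIndex_eq_one.mp hrel)

end IsPiHall

open MulAction in
theorem Subgroup.exists_conjSub_eq_of_isComplement' {G : Type*} [Group G] [Finite G]
    {N K₁ K₂ : Subgroup G} [N.Normal] [IsMulCommutative N]
    (hcop : (Nat.card N).Coprime N.index) (h₁ : IsComplement' N K₁)
    (h₂ : IsComplement' N K₂) :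
    ∃ n ∈ N, conjSub K₁ n = K₂ := by
  let cls (K : Subgroup G) (hK : IsComplement' N K) : N.QuotientDiff :=
    Quotient.mk'' ⟨K, hK.symm⟩
  have hstab (K : Subgroup G) (hK : IsComplement' N K) : stabilizer G (cls K hK) = K := by
    have hle : K ≤ stabilizer G (cls K hK) := fun k hk =>
      congrArg Quotient.mk'' (Subtype.ext (op_smul_coe_set (K.inv_mem hk)))
    have hrel := Subgroup.relIndex_mul_index hle
    rw [hK.index_eq_card, (isComplement'_stabilizer_of_coprime hcop).index_eq_card] at hrel
    exact (le_antisymm hle (Subgroup.relIndex_eq_one.mp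
      ((Nat.mul_eq_right Nat.card_pos.ne').mp hrel))).symm
  obtain ⟨n, hn⟩ := exists_smul_eq hcop (cls K₁ h₁) (cls K₂ h₂)
  refine ⟨(n : G)⁻¹, N.inv_mem n.2, ?_⟩
  rw [← hstab K₂ h₂, ← hn, Subgroup.smul_def, stabilizer_smul_eq_stabilizer_map_conj,
    hstab K₁ h₁, conjSub_eq_map, inv_inv]

section Abelian

variable {G : Type*} [Group G]

theorem Subgroup.normal_inf_of_sup_eq_top {H N : Subgroup G} [N.Normal] [IsMulCommutative N]
    (hs : H ⊔ N = ⊤) : (H ⊓ N).Normal := by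
  rw [← Subgroup.normalizer_eq_top_iff, eq_top_iff, ← hs, sup_le_iff]
  refine ⟨(le_inf H.le_normalizer Subgroup.le_normalizer_of_normal).trans
    Subgroup.inf_normalizer_le_normalizer_inf, fun n hn x => ?_⟩
  by_cases hx : x ∈ N
  · rw [setLike_mul_comm hn hx, mul_inv_cancel_right]
  · have hconj : n * x * n⁻¹ ∉ N := by
      rwa [N.mul_mem_cancel_right (N.inv_mem hn), N.mul_mem_cancel_left hn]
    exact iff_of_false (fun h => hx h.2) (fun h => hconj h.2)

theorem Subgroup.isComplement'_map_mk' {H N T : Subgroup G} [N.Normal] [T.Normal]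
    (hinf : H ⊓ N = T) (hsup : H ⊔ N = ⊤) :
    IsComplement' (N.map (QuotientGroup.mk' T)) (H.map (QuotientGroup.mk' T)) := by
  have hf := QuotientGroup.mk'_surjective T
  have : (N.map (QuotientGroup.mk' T)).Normal := ‹N.Normal›.map _ hf
  refine isComplement'_of_disjoint_and_mul_eq_univ ?_ ?_
  · rw [disjoint_iff, ← (Subgroup.comap_injective hf).eq_iff, Subgroup.comap_inf,
      Subgroup.comap_map_eq, Subgroup.comap_map_eq, MonoidHom.comap_bot, QuotientGroup.ker_mk',
      sup_eq_left.mpr (hinf ▸ inf_le_right), sup_eq_left.mpr (hinf ▸ inf_le_left), inf_comm,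
      hinf]
  · rw [← Subgroup.normal_mul, ← Subgroup.map_sup, sup_comm, hsup,
      Subgroup.map_top_of_surjective _ hf, Subgroup.coe_top]

theorem exists_conjSub_eq_of_isMulCommutative [Finite G] {π : Set ℕ} {N H₁ H₂ : Subgroup G}
    [N.Normal] [IsMulCommutative N] (h₁ : IsPiHall π H₁) (h₂ : IsPiHall π H₂)
    (hs₁ : H₁ ⊔ N = ⊤) (hs₂ : H₂ ⊔ N = ⊤) : ∃ c ∈ N, conjSub H₁ c = H₂ := by
  have := Subgroup.normal_inf_of_sup_eq_top hs₁
  have := Subgroup.normal_inf_of_sup_eq_top hs₂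
  have hπ {H : Subgroup G} (h : IsPiHall π H) (p : ℕ) (hp : p.Prime)
      (hd : p ∣ Nat.card ↥(H ⊓ N)) : p ∈ π :=
    h.1 p hp (hd.trans (Subgroup.card_dvd_of_le inf_le_left))
  -- each `Hᵢ ⊓ N` is a normal `π`-subgroup, hence lies in the other Hall subgroup
  have hinf : H₂ ⊓ N = H₁ ⊓ N :=
    le_antisymm (le_inf (h₁.le_of_normal (hπ h₂)) inf_le_right)
      (le_inf (h₂.le_of_normal (hπ h₁)) inf_le_right)
  have hf := QuotientGroup.mk'_surjective (H₁ ⊓ N)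
  have : (N.map (QuotientGroup.mk' (H₁ ⊓ N))).Normal := ‹N.Normal›.map _ hf
  have hc₁ := Subgroup.isComplement'_map_mk' rfl hs₁
  have hcop : (Nat.card (N.map (QuotientGroup.mk' (H₁ ⊓ N)))).Coprime
      (N.map (QuotientGroup.mk' (H₁ ⊓ N))).index := by
    rw [← hc₁.index_eq_card, hc₁.symm.index_eq_card]
    exact (h₁.map hf).coprime.symm
  obtain ⟨_, ⟨c, hc, rfl⟩, hconj⟩ :=
    Subgroup.exists_conjSub_eq_of_isComplement' hcop hc₁
      (Subgroup.isComplement'_map_mk' hinf hs₂)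
  refine ⟨c, hc, Subgroup.map_injective_of_ker_le _ ?_ ?_ ((map_conjSub _ _ _).trans hconj)⟩
  · rw [QuotientGroup.ker_mk', ← conjSub_of_normal (H₁ ⊓ N) c]
    exact conjSub_mono inf_le_left c
  · rw [QuotientGroup.ker_mk', ← hinf]
    exact inf_le_left

end Abelian

def HallConjugateUnder {G : Type*} [Group G] (π : Set ℕ) (N : Subgroup G) : Prop :=
  ∀ H₁ H₂ : Subgroup G, IsPiHall π H₁ → IsPiHall π H₂ → H₁ ⊔ N = H₂ ⊔ N →
    ∃ c ∈ N, conjSub H₁ c = H₂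

namespace HallConjugateUnder

variable {G : Type*} [Group G] {π : Set ℕ}

theorem of_isMulCommutative [Finite G] (N : Subgroup G) [N.Normal] [IsMulCommutative N] :
    HallConjugateUnder π N := by
  intro H₁ H₂ h₁ h₂ hsup
  have hN : N ≤ H₁ ⊔ N := le_sup_right
  have hH₁ : H₁ ≤ H₁ ⊔ N := le_sup_left
  have hH₂ : H₂ ≤ H₁ ⊔ N := hsup ▸ le_sup_left
  have htop {H : Subgroup G} (hH : H ≤ H₁ ⊔ N) (hHN : H ⊔ N = H₁ ⊔ N) :
      H.subgroupOf (H₁ ⊔ N) ⊔ N.subgroupOf (H₁ ⊔ N) = ⊤ := by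
    rw [Subgroup.sup_subgroupOf_of_normal N hH, hHN, Subgroup.subgroupOf_self]
  obtain ⟨c, hc, hconj⟩ := exists_conjSub_eq_of_isMulCommutative (h₁.subgroupOf hH₁)
    (h₂.subgroupOf hH₂) (htop hH₁ rfl) (htop hH₂ hsup.symm)
  exact ⟨c, hc, conjSub_eq_of_conjSub_subgroupOf_eq hH₁ hH₂ hconj⟩

theorem of_quotient {N K : Subgroup G} [K.Normal] (hKN : K ≤ N) (hK : HallConjugateUnder π K)
    (hNK : HallConjugateUnder π (N.map (QuotientGroup.mk' K))) : HallConjugateUnder π N := by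
  intro H₁ H₂ h₁ h₂ hsup
  have hf := QuotientGroup.mk'_surjective K
  obtain ⟨_, ⟨c, hc, rfl⟩, hconj⟩ := hNK _ _ (h₁.map hf) (h₂.map hf)
    (by rw [← Subgroup.map_sup, ← Subgroup.map_sup, hsup])
  have hsupK := Subgroup.sup_ker_eq_of_map_eq _ ((map_conjSub _ _ _).trans hconj)
  rw [QuotientGroup.ker_mk'] at hsupK
  obtain ⟨d, hd, hconj'⟩ := hK _ _ (h₁.conjSub c) h₂ hsupK
  exact ⟨c * d, N.mul_mem hc (hKN hd), by rw [conjSub_mul, hconj']⟩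

end HallConjugateUnder

section Solvable

variable {G : Type*} [Group G]

theorem Subgroup.card_map_mk'_lt [Finite G] {N K : Subgroup G} [K.Normal] (hKN : K ≤ N)
    (hK : K ≠ ⊥) : Nat.card (N.map (QuotientGroup.mk' K)) < Nat.card N := by
  have h := Subgroup.card_mul_index (K.subgroupOf N)
  rw [Nat.card_congr (Subgroup.subgroupOfEquivOfLe hKN).toEquiv] at h
  rw [← Subgroup.relIndex_ker, QuotientGroup.ker_mk', ← h]
  exact lt_mul_left (Nat.pos_of_ne_zero Subgroup.index_ne_zero_of_finite)
    ((Subgroup.one_lt_card_iff_ne_bot K).mpr hK)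

theorem Subgroup.commutator_lt_of_isSolvable {N : Subgroup G} [Group.IsSolvable N]
    (hN : N ≠ ⊥) : ⁅N, N⁆ < N := by
  have := (Subgroup.nontrivial_iff_ne_bot N).mpr hN
  have h := (Subgroup.map_lt_map_iff_of_injective N.subtype_injective).mpr
    (Group.IsSolvable.commutator_lt_top_of_nontrivial N)
  rwa [_root_.commutator_def, Subgroup.map_commutator, ← MonoidHom.range_eq_map,
    Subgroup.range_subtype] at h

theorem Subgroup.isSolvable_subgroupOf (A K : Subgroup G) [Group.IsSolvable A] :
    Group.IsSolvable (A.subgroupOf K) :=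
  Group.isSolvable_of_isSolvable_injective
    (f := (K.subtype.comp (A.subgroupOf K).subtype).codRestrict A fun x => x.2)
    fun _ _ h => Subtype.val_injective (Subtype.val_injective (congrArg (Subtype.val : A → G) h))

end Solvable

universe u

theorem hallConjugateUnder_of_isSolvable {G : Type u} [Group G] [Finite G] (π : Set ℕ)
    (N : Subgroup G) [N.Normal] [Group.IsSolvable N] : HallConjugateUnder π N := by
  induction hn : Nat.card N using Nat.strong_induction_on generalizing G with
  | _ n ih =>
  by_cases hcomm : IsMulCommutative N
  · exact HallConjugateUnder.of_isMulCommutative N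
  set K := ⁅N, N⁆
  have hK : K ≠ ⊥ := mt Subgroup.commutator_self_eq_bot_iff.mp hcomm
  have hKN : K < N :=
    Subgroup.commutator_lt_of_isSolvable (ne_bot_of_le_ne_bot hK (Subgroup.commutator_le_left N N))
  have : Group.IsSolvable K :=
    Group.isSolvable_of_isSolvable_injective (Subgroup.inclusion_injective hKN.le)
  have hf := QuotientGroup.mk'_surjective K
  have : (N.map (QuotientGroup.mk' K)).Normal := ‹N.Normal›.map _ hf
  have : Group.IsSolvable (N.map (QuotientGroup.mk' K)) :=
    Group.isSolvable_of_surjective (MonoidHom.subgroupMap_surjective _ N)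
  exact HallConjugateUnder.of_quotient hKN.le
    (ih _ (hn ▸ Set.Finite.card_lt_card (Set.toFinite _) hKN) K rfl)
    (ih _ (hn ▸ Subgroup.card_map_mk'_lt hKN.le hK) _ rfl)

theorem stmt_18 {G : Type*} [Group G] [Finite G] (π : Set ℕ)
    (H A : Subgroup G) [A.Normal] (hA : IsSolvable A)
    (hHall : IsPiHall π H)
    (hbar : IsPronormal (H.map (QuotientGroup.mk' A))) :
    IsPronormal H := by
  intro g
  obtain ⟨_, hx, hconj⟩ := hbar (QuotientGroup.mk' A g)
  rw [← map_conjSub, ← Subgroup.map_sup] at hx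
  obtain ⟨y, hy, rfl⟩ := hx
  have hyA := Subgroup.sup_ker_eq_of_map_eq (QuotientGroup.mk' A)
    (H₁ := conjSub H y) (H₂ := conjSub H g) (by rw [map_conjSub, map_conjSub, hconj])
  rw [QuotientGroup.ker_mk'] at hyA
  set K := H ⊔ conjSub H g
  have hHy : conjSub H y ≤ K := (conjSub_mono le_sup_left y).trans (conjSub_of_mem hy).le
  have hHg : conjSub H g ≤ K := le_sup_right
  have : Group.IsSolvable A := hA
  have := Subgroup.isSolvable_subgroupOf A K
  obtain ⟨c, -, hc⟩ := hallConjugateUnder_of_isSolvable π (A.subgroupOf K) _ _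
    ((hHall.conjSub y).subgroupOf hHy) ((hHall.conjSub g).subgroupOf hHg)
    (by rw [Subgroup.sup_subgroupOf_of_normal A hHy, Subgroup.sup_subgroupOf_of_normal A hHg, hyA])
  exact ⟨y * c, K.mul_mem hy c.2,
    by rw [conjSub_mul, conjSub_eq_of_conjSub_subgroupOf_eq hHy hHg hc]⟩
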